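/- With the setting of the previous statement (distinct reals $L_1,\ldots,L_n$, $\beta\in(0.5,1)$, $0<\varepsilon_n<(n-\lceil n\beta\rceil+1)^{-1}$), define the Type 1 CVaR estimator $\widehat{CV1}_n=\min_{\alpha\in\mathbb{R}}\big[(1-\varepsilon_n)\alpha+\frac{1}{n-\lceil n\beta\rceil+1}\sum_{i=1}^n(L_i-\alpha)^+\big]$ and the Type 2 CVaR estimator $\widehat{CV2}_n=\frac{1}{n-\lceil n\beta\rceil+1}\sum_{i=1}^n L_i\,\mathbb{1}(L_i\ge L_{(\lceil n\beta\rceil)})$. Then $\widehat{CV2}_n=\widehat{CV1}_n+\varepsilon_n L_{(\lceil n\beta\rceil)}$. -/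

import Mathlib

/-!
Write `S(α) = ∑ᵢ (Lᵢ - α)⁺` and `q = L₍ₖ₎`. The slopes of the convex function `S` just left
and right of `q` are `-#{i | q ≤ Lᵢ}` and `-#{i | q < Lᵢ}`, i.e. `-m` and `-(m - 1)` with
`m = n - k + 1`. Since `0 < ε < 1/m`, the Type 1 objective `(1 - ε)α + S(α)/m` therefore
decreases up to `q` and increases after it, so its minimum is attained at `α = q`. There
`S(q) = ∑ᵢ Lᵢ 𝟙(q ≤ Lᵢ) - m q`, which turns the minimum into `CV2 - ε q`.
-/

open Finset

section Threshold

variable {ι : Type*} [Fintype ι]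

/-- Subgradient inequality for `α ↦ ∑ᵢ (xᵢ - α)⁺` at `q`: any `s` squeezed between
`{i | q < xᵢ}` and `{i | q ≤ xᵢ}` gives the slope `-#s`. -/
lemma sum_max_sub_add_card_mul_le (x : ι → ℝ) (s : Finset ι) {q : ℝ}
    (hs_le : ∀ i ∈ s, q ≤ x i) (hs_lt : ∀ i, q < x i → i ∈ s) (α : ℝ) :
    ∑ i, max (x i - q) 0 + #s * (q - α) ≤ ∑ i, max (x i - α) 0 := by
  classical
  have hcard : (#s : ℝ) * (q - α) = ∑ i, if i ∈ s then q - α else 0 := by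
    rw [sum_ite_mem, univ_inter, sum_const, nsmul_eq_mul]
  rw [hcard, ← sum_add_distrib]
  refine sum_le_sum fun i _ => ?_
  by_cases hi : i ∈ s
  · rw [if_pos hi, max_eq_left (sub_nonneg.2 (hs_le i hi))]
    exact (le_max_left _ _).trans_eq' (by ring)
  · have hxq : x i ≤ q := not_lt.1 fun h => hi (hs_lt i h)
    simp only [hi, if_false, add_zero, max_eq_right (sub_nonpos.2 hxq)]
    exact le_max_right _ _

lemma sum_max_sub_eq (x : ι → ℝ) (q : ℝ) :
    ∑ i, max (x i - q) 0 =
      (∑ i, if q ≤ x i then x i else 0) - #{i | q ≤ x i} * q := by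
  rw [← nsmul_eq_mul, ← sum_const, sum_filter, ← sum_sub_distrib]
  refine sum_congr rfl fun i _ => ?_
  split_ifs with h
  · exact max_eq_left (sub_nonneg.2 h)
  · rw [max_eq_right (by linarith [not_le.1 h])]
    simp

noncomputable def cvarObjective (x : ι → ℝ) (ε c α : ℝ) : ℝ :=
  (1 - ε) * α + (∑ i, max (x i - α) 0) / c

lemma isLeast_range_cvarObjective {x : ι → ℝ} {ε : ℝ} (j : ι) (hε : 0 ≤ ε)
    (hεc : ε * #{i | x j ≤ x i} ≤ 1) :
    IsLeast (Set.range (cvarObjective x ε #{i | x j ≤ x i}))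
      (cvarObjective x ε #{i | x j ≤ x i} (x j)) := by
  refine ⟨⟨x j, rfl⟩, Set.forall_mem_range.2 fun α => ?_⟩
  set q := x j
  set c : ℝ := ((#{i | q ≤ x i} : ℕ) : ℝ)
  have hcard_lt : #{i | q < x i} + 1 ≤ #{i | q ≤ x i} := by
    refine card_lt_card (ssubset_iff_of_subset ?_ |>.2 ⟨j, ?_⟩)
    · exact monotone_filter_right _ fun _ _ => le_of_lt
    · simp [q]
  have hc_pos : 0 < c := Nat.cast_pos.2 (by omega)
  have hcard_lt' : ((#{i | q < x i} : ℕ) : ℝ) ≤ c - 1 := by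
    have h := (Nat.cast_le (α := ℝ)).2 hcard_lt
    push_cast at h
    exact le_sub_iff_add_le.2 h
  set S : ℝ → ℝ := fun a => ∑ i, max (x i - a) 0
  have key : (1 - ε) * q * c + S q ≤ (1 - ε) * α * c + S α := by
    rcases le_total α q with hαq | hqα
    · have := sum_max_sub_add_card_mul_le x {i | q ≤ x i} (q := q) (by simp)
        (fun i h => by simp [h.le]) α
      nlinarith [mul_nonneg (mul_nonneg hε hc_pos.le) (sub_nonneg.2 hαq)]
    · have := sum_max_sub_add_card_mul_le x {i | q < x i} (q := q)
        (fun i hi => (mem_filter.1 hi).2.le) (by simp) α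
      nlinarith [mul_nonneg (sub_nonneg.2 hcard_lt') (sub_nonneg.2 hqα),
        mul_nonneg (sub_nonneg.2 hεc) (sub_nonneg.2 hqα)]
  calc (1 - ε) * q + S q / c = ((1 - ε) * q * c + S q) / c := by field_simp
    _ ≤ ((1 - ε) * α * c + S α) / c := by gcongr
    _ = (1 - ε) * α + S α / c := by field_simp

end Threshold

lemma card_filter_apply_le_of_strictMono {α : Type*} [LinearOrder α] {n : ℕ} {L : Fin n → α}
    {σ : Equiv.Perm (Fin n)} (hσ : StrictMono (fun i => L (σ i))) (j : Fin n) :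
    #{i | L (σ j) ≤ L i} = n - j := by
  rw [← Fin.card_Ici, ← card_map σ.symm.toEmbedding]
  congr 1
  ext i
  simp only [mem_filter, mem_univ, true_and, mem_map_equiv, mem_Ici, Equiv.symm_symm]
  exact hσ.le_iff_le

theorem stmt1 (n : ℕ) (ε : ℝ)
    (L : Fin n → ℝ) (σ : Equiv.Perm (Fin n)) (hσ : StrictMono (fun i => L (σ i)))
    (k : ℕ) (hk1 : 1 ≤ k) (hkn : k ≤ n)
    (hε : 0 < ε ∧ ε < ((n : ℝ) - k + 1)⁻¹) :
    ∀ G : ℝ → ℝ,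
      (G = fun α => (1 - ε) * α + (∑ i, max (L i - α) 0) / ((n : ℝ) - k + 1)) →
      (∑ i, if L (σ ⟨k - 1, by omega⟩) ≤ L i then L i else 0) / ((n : ℝ) - k + 1)
        = sInf (Set.range G) + ε * L (σ ⟨k - 1, by omega⟩) := by
  intro G hG
  set q := L (σ ⟨k - 1, by omega⟩)
  have hcard : ((#{i | q ≤ L i} : ℕ) : ℝ) = n - k + 1 := by
    rw [card_filter_apply_le_of_strictMono hσ, Nat.cast_sub (by simp; omega)]
    push_cast [Nat.cast_sub hk1]
    ring
  have hm_pos : (0 : ℝ) < n - k + 1 := by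
    have : (k : ℝ) ≤ n := by exact_mod_cast hkn
    linarith
  have hεm : ε * (n - k + 1) ≤ 1 :=
    ((lt_inv_mul_iff₀' hm_pos).1 (by rw [mul_one]; exact hε.2)).le
  have hG' : G = cvarObjective L ε #{i | q ≤ L i} := by rw [hG, hcard]; rfl
  have hleast : IsLeast (Set.range G) (G q) :=
    hG' ▸ isLeast_range_cvarObjective _ hε.1.le (hcard ▸ hεm)
  rw [hleast.csInf_eq, hG', cvarObjective, sum_max_sub_eq, hcard]
  field_simp
  ring
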